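/- arXiv:2207.06164 — 4 statements merged into one kernel-verified Lean document; each statement's English description precedes it below -/
import Mathlib

section
/- Let n ≥ 1, let σ = (σ_1, …, σ_{n+1}) be positive real numbers, and let f, φ : ℝ^{n+1} → ℝ be differentiable functions that are quasihomogeneous of types (σ, m) and (σ, d) respectively, with m > 0 and d > 0. If x ∈ ℝ^{n+1} satisfies f(x) = 0, φ(x) ≠ 0 and ∇f(x) ≠ 0, then the gradients ∇f(x) and ∇φ(x) are linearly independent; in particular the level sets {f = 0} and {φ = φ(x)} meet transversely at x. -/
/-!
Differentiating the quasihomogeneity relation at `t = 1` gives Euler's identity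
`Df(x)(E_σ x) = m f(x)` for the weighted Euler field `E_σ x = (σ_j x_j)_j`. Pairing with `E_σ x`
is a linear functional on gradients that kills `∇f(x)` (as `f x = 0`) but not `∇φ(x)`
(as `d φ(x) ≠ 0`), so `∇φ(x)` is no multiple of the nonzero vector `∇f(x)`.
-/

open Filter

lemma LinearIndependent.pair_of_apply_eq_zero_of_apply_ne_zero {K V W : Type*} [Field K]
    [AddCommGroup V] [Module K V] [AddCommGroup W] [Module K W] {x y : V} (hx : x ≠ 0)
    (ℓ : V →ₗ[K] W) (hℓx : ℓ x = 0) (hℓy : ℓ y ≠ 0) : LinearIndependent K ![x, y] :=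
  (LinearIndependent.pair_iff' hx).2 fun a hy => hℓy <| by rw [← hy, map_smul, hℓx, smul_zero]

lemma dotProduct_apply_single {R ι F : Type*} [CommSemiring R] [Fintype ι] [DecidableEq ι]
    [FunLike F (ι → R) R] [LinearMapClass F R (ι → R) R] (L : F) (v : ι → R) :
    v ⬝ᵥ (fun j => L (Pi.single j 1)) = L v := by
  rw [dotProduct_comm]
  have hL := (dotProductEquiv R ι).apply_symm_apply (L : (ι → R) →ₗ[R] R)
  exact congr($hL v)

def IsQuasihomogeneous {ι F : Type*} [SMul ℝ F] (σ : ι → ℝ) (m : ℝ) (g : (ι → ℝ) → F) :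
    Prop :=
  ∀ t : ℝ, 0 < t → ∀ x, g (fun j => t ^ σ j * x j) = t ^ m • g x

def eulerField {ι : Type*} (σ : ι → ℝ) (x : ι → ℝ) : ι → ℝ :=
  fun j => σ j * x j

theorem IsQuasihomogeneous.fderiv_eulerField {ι F : Type*} [Fintype ι]
    [NormedAddCommGroup F] [NormedSpace ℝ F] {σ : ι → ℝ} {m : ℝ} {g : (ι → ℝ) → F}
    (hq : IsQuasihomogeneous σ m g) {x : ι → ℝ} (hg : DifferentiableAt ℝ g x) :
    fderiv ℝ g x (eulerField σ x) = m • g x := by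
  have hcurve : HasDerivAt (fun t : ℝ => fun j => t ^ σ j * x j) (eulerField σ x) 1 :=
    hasDerivAt_pi.2 fun j => by
      simpa [eulerField] using
        (Real.hasDerivAt_rpow_const (p := σ j) (Or.inl one_ne_zero)).mul_const (x j)
  have horbit : HasDerivAt (fun t : ℝ => g fun j => t ^ σ j * x j)
      (fderiv ℝ g x (eulerField σ x)) 1 :=
    hg.hasFDerivAt.comp_hasDerivAt_of_eq 1 hcurve (by simp)
  have hpow : HasDerivAt (fun t : ℝ => t ^ m • g x) (m • g x) 1 := by
    simpa using (Real.hasDerivAt_rpow_const (p := m) (Or.inl one_ne_zero)).smul_const (g x)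
  refine horbit.unique (hpow.congr_of_eventuallyEq ?_)
  filter_upwards [eventually_gt_nhds one_pos] with t ht using hq t ht x

theorem gradients_linearIndependent_of_quasihomogeneous_general
    (n : ℕ) (σ : Fin (n + 1) → ℝ)
    (m d : ℝ) (hd : 0 < d)
    (f φ : (Fin (n + 1) → ℝ) → ℝ)
    (hφ : Differentiable ℝ φ)
    (hqf : ∀ t : ℝ, 0 < t → ∀ x : Fin (n + 1) → ℝ,
      f (fun j => t ^ (σ j) * x j) = t ^ m * f x)
    (hqφ : ∀ t : ℝ, 0 < t → ∀ x : Fin (n + 1) → ℝ,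
      φ (fun j => t ^ (σ j) * x j) = t ^ d * φ x)
    (x : Fin (n + 1) → ℝ) (hx0 : f x = 0) (hx1 : φ x ≠ 0)
    (hgrad : (fun j => fderiv ℝ f x (Pi.single j 1)) ≠ (0 : Fin (n + 1) → ℝ)) :
    LinearIndependent ℝ
      ![fun j => fderiv ℝ f x (Pi.single j 1),
        fun j => fderiv ℝ φ x (Pi.single j 1)] := by
  -- `fderiv` is junk `0` where `f` is not differentiable, which `hgrad` rules out.
  have hf : DifferentiableAt ℝ f x := by
    by_contra h
    exact hgrad (funext fun j => by simp [fderiv_zero_of_not_differentiableAt h])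
  refine .pair_of_apply_eq_zero_of_apply_ne_zero hgrad
    (dotProductEquiv ℝ _ (eulerField σ x)) ?_ ?_
  · rw [dotProductEquiv_apply_apply, dotProduct_apply_single,
      IsQuasihomogeneous.fderiv_eulerField hqf hf, hx0, smul_zero]
  · rw [dotProductEquiv_apply_apply, dotProduct_apply_single,
      IsQuasihomogeneous.fderiv_eulerField hqφ (hφ x), smul_eq_mul]
    exact mul_ne_zero hd.ne' hx1

/-- **Transversality of a quasihomogeneous hypersurface and a quasihomogeneous gauge level set.**
If `f, φ : ℝ^{n+1} → ℝ` are differentiable and quasihomogeneous of types `(σ, m)` and `(σ, d)`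
with `m, d > 0`, and `x` satisfies `f x = 0`, `φ x ≠ 0`, `∇f(x) ≠ 0`, then `∇f(x)` and `∇φ(x)`
are linearly independent (so the level sets `{f = 0}` and `{φ = φ x}` meet transversely at `x`). -/
theorem gradients_linearIndependent_of_quasihomogeneous
    (n : ℕ) (hn : 1 ≤ n) (σ : Fin (n + 1) → ℝ) (hσ : ∀ j, 0 < σ j)
    (m d : ℝ) (hm : 0 < m) (hd : 0 < d)
    (f φ : (Fin (n + 1) → ℝ) → ℝ)
    (hf : Differentiable ℝ f) (hφ : Differentiable ℝ φ)
    (hqf : ∀ t : ℝ, 0 < t → ∀ x : Fin (n + 1) → ℝ,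
      f (fun j => t ^ (σ j) * x j) = t ^ m * f x)
    (hqφ : ∀ t : ℝ, 0 < t → ∀ x : Fin (n + 1) → ℝ,
      φ (fun j => t ^ (σ j) * x j) = t ^ d * φ x)
    (x : Fin (n + 1) → ℝ) (hx0 : f x = 0) (hx1 : φ x ≠ 0)
    (hgrad : (fun j => fderiv ℝ f x (Pi.single j 1)) ≠ (0 : Fin (n + 1) → ℝ)) :
    LinearIndependent ℝ
      ![fun j => fderiv ℝ f x (Pi.single j 1),
        fun j => fderiv ℝ φ x (Pi.single j 1)] :=
  gradients_linearIndependent_of_quasihomogeneous_general n σ m d hd f φ hφ hqf hqφ x hx0 hx1 hgrad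
end

section
/- Let n ≥ 1, let σ = (σ_1, …, σ_{n+1}) be positive real numbers and m' > m > 0. Let ρ(x) = Σ_{j=1}^{n+1} |x_j|^{1/σ_j} be the quasihomogeneous gauge. Let f = f_Γ + R, where f_Γ : ℝ^{n+1} → ℝ is continuous and quasihomogeneous of type (σ, m), and R : ℝ^{n+1} → ℝ satisfies |R(x)| ≤ C ρ(x)^{m'} for some constant C > 0 and all x with ρ(x) ≤ 1. Suppose (x_k) is a sequence with f(x_k) = 0, (t_k) is a sequence of positive reals with t_k → ∞, and S_{t_k,σ}(x_k) → η as k → ∞. Then f_Γ(η) = 0. In other words, the quasihomogeneous tangent cone of the zero set of f is contained in the zero set of the principal part f_Γ. -/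
/-!
Quasihomogeneity gives `f_Γ(S_{t_k}(x_k)) = t_k^m f_Γ(x_k) = -t_k^m R(x_k)`, and the left side
tends to `f_Γ(η)`. Since the gauge scales linearly, `t_k ρ(x_k) = ρ(S_{t_k}(x_k)) → ρ(η)`, so
`ρ(x_k) → 0` and `|t_k^m R(x_k)| ≤ |C| t_k^{m-m'} (t_k ρ(x_k))^{m'} → 0`.
-/

open Filter Topology

noncomputable section

variable {ι : Type*} [Fintype ι]

def quasiGauge (σ : ι → ℝ) (x : ι → ℝ) : ℝ := ∑ j, |x j| ^ (1 / σ j)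

def quasiScale (σ : ι → ℝ) (t : ℝ) (x : ι → ℝ) : ι → ℝ := fun j => t ^ σ j * x j

theorem quasiGauge_nonneg (σ x : ι → ℝ) : 0 ≤ quasiGauge σ x :=
  Finset.sum_nonneg fun _ _ => Real.rpow_nonneg (abs_nonneg _) _

theorem continuous_quasiGauge {σ : ι → ℝ} (hσ : ∀ j, 0 ≤ σ j) : Continuous (quasiGauge σ) :=
  continuous_finsetSum _ fun j _ =>
    (Real.continuous_rpow_const (one_div_nonneg.2 (hσ j))).comp (continuous_apply j).abs

theorem quasiGauge_quasiScale {σ : ι → ℝ} (hσ : ∀ j, σ j ≠ 0) {t : ℝ} (ht : 0 < t)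
    (x : ι → ℝ) : quasiGauge σ (quasiScale σ t x) = t * quasiGauge σ x := by
  simp only [quasiGauge, quasiScale, Finset.mul_sum]
  refine Finset.sum_congr rfl fun j _ => ?_
  rw [abs_mul, abs_of_pos (Real.rpow_pos_of_pos ht _),
    Real.mul_rpow (Real.rpow_pos_of_pos ht _).le (abs_nonneg _), ← Real.rpow_mul ht.le,
    mul_one_div_cancel (hσ j), Real.rpow_one]

theorem tendsto_mul_quasiGauge {α : Type*} {l : Filter α} {σ : ι → ℝ} (hσ : ∀ j, 0 < σ j)
    {t : α → ℝ} {x : α → ι → ℝ} {η : ι → ℝ} (ht : ∀ᶠ a in l, 0 < t a)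
    (hlim : Tendsto (fun a => quasiScale σ (t a) (x a)) l (𝓝 η)) :
    Tendsto (fun a => t a * quasiGauge σ (x a)) l (𝓝 (quasiGauge σ η)) := by
  refine (((continuous_quasiGauge fun j => (hσ j).le).tendsto η).comp hlim).congr' ?_
  filter_upwards [ht] with a ha
  exact quasiGauge_quasiScale (fun j => (hσ j).ne') ha (x a)

theorem tendsto_rpow_mul_of_abs_le_mul_rpow {α β : Type*} {l : Filter α} {ρ R : β → ℝ}
    {C m m' L : ℝ} (hρ : ∀ y, 0 ≤ ρ y) (hm' : 0 ≤ m') (hmm' : m < m')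
    (hR : ∀ y, ρ y ≤ 1 → |R y| ≤ C * ρ y ^ m') {t : α → ℝ} {y : α → β}
    (ht : Tendsto t l atTop) (hty : Tendsto (fun a => t a * ρ (y a)) l (𝓝 L)) :
    Tendsto (fun a => t a ^ m * R (y a)) l (𝓝 0) := by
  have hpos : ∀ᶠ a in l, 0 < t a := ht.eventually_gt_atTop 0
  have hρy : Tendsto (fun a => ρ (y a)) l (𝓝 0) := by
    refine (hty.div_atTop ht).congr' ?_
    filter_upwards [hpos] with a ha
    exact mul_div_cancel_left₀ _ ha.ne'
  have hdecay : Tendsto (fun a => t a ^ (m - m')) l (𝓝 0) := by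
    simpa only [neg_sub, Function.comp_def] using
      (tendsto_rpow_neg_atTop (sub_pos.2 hmm')).comp ht
  have hbound : Tendsto (fun a => |C| * t a ^ (m - m') * (t a * ρ (y a)) ^ m') l (𝓝 0) := by
    simpa using (hdecay.const_mul |C|).mul (hty.rpow_const (Or.inr hm'))
  refine squeeze_zero_norm' ?_ hbound
  filter_upwards [hpos, hρy.eventually_le_const zero_lt_one] with a ha hρa
  have htm : t a ^ (m - m') * (t a * ρ (y a)) ^ m' = t a ^ m * ρ (y a) ^ m' := by
    rw [Real.mul_rpow ha.le (hρ _), ← mul_assoc, ← Real.rpow_add ha, sub_add_cancel]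
  calc ‖t a ^ m * R (y a)‖ = t a ^ m * |R (y a)| := by
        rw [Real.norm_eq_abs, abs_mul, abs_of_pos (Real.rpow_pos_of_pos ha _)]
    _ ≤ t a ^ m * (|C| * ρ (y a) ^ m') := by
        gcongr
        exact (hR _ hρa).trans
          (mul_le_mul_of_nonneg_right (le_abs_self C) (Real.rpow_nonneg (hρ _) _))
    _ = |C| * t a ^ (m - m') * (t a * ρ (y a)) ^ m' := by rw [mul_assoc, htm]; ring

end

theorem tangent_cone_in_zero_set_of_principal_part_general
    (n : ℕ) (σ : Fin (n + 1) → ℝ) (hσ : ∀ j, 0 < σ j)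
    (m m' : ℝ) (hm : 0 < m) (hmm' : m < m')
    (fΓ R : (Fin (n + 1) → ℝ) → ℝ)
    (hfΓcont : Continuous fΓ)
    (hfΓqh : ∀ t : ℝ, 0 < t → ∀ x : Fin (n + 1) → ℝ,
      fΓ (fun j => t ^ (σ j) * x j) = t ^ m * fΓ x)
    (C : ℝ)
    (hR : ∀ x : Fin (n + 1) → ℝ, (∑ j, |x j| ^ (1 / σ j)) ≤ 1 →
      |R x| ≤ C * (∑ j, |x j| ^ (1 / σ j)) ^ m')
    (x : ℕ → Fin (n + 1) → ℝ) (hx : ∀ k, fΓ (x k) + R (x k) = 0)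
    (t : ℕ → ℝ) (ht : Tendsto t atTop atTop)
    (η : Fin (n + 1) → ℝ)
    (hlim : Tendsto (fun k => (fun j => (t k) ^ (σ j) * x k j)) atTop (nhds η)) :
    fΓ η = 0 := by
  have hpos : ∀ᶠ k in atTop, 0 < t k := ht.eventually_gt_atTop 0
  have hremainder : Tendsto (fun k => t k ^ m * R (x k)) atTop (𝓝 0) :=
    tendsto_rpow_mul_of_abs_le_mul_rpow (quasiGauge_nonneg σ) (hm.trans hmm').le hmm' hR ht
      (tendsto_mul_quasiGauge hσ hpos hlim)
  have hscaled : Tendsto (fun k => fΓ (quasiScale σ (t k) (x k))) atTop (𝓝 0) := by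
    have hneg := hremainder.neg
    rw [neg_zero] at hneg
    refine hneg.congr' ?_
    filter_upwards [hpos] with k hk
    unfold quasiScale
    rw [hfΓqh _ hk, eq_neg_of_add_eq_zero_left (hx k), mul_neg]
  exact tendsto_nhds_unique ((hfΓcont.tendsto η).comp hlim) hscaled

/-- **The quasihomogeneous tangent cone lies in the zero set of the principal part.**
Let `f = f_Γ + R` with `f_Γ` continuous and quasihomogeneous of type `(σ, m)` and
`|R x| ≤ C ρ(x)^{m'}` for the quasihomogeneous gauge `ρ(x) = ∑ |x_j|^{1/σ_j}`, `m' > m > 0`.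
If `f (x_k) = 0`, `t_k → ∞` and `S_{t_k,σ}(x_k) → η`, then `f_Γ η = 0`. -/
theorem tangent_cone_in_zero_set_of_principal_part
    (n : ℕ) (hn : 1 ≤ n) (σ : Fin (n + 1) → ℝ) (hσ : ∀ j, 0 < σ j)
    (m m' : ℝ) (hm : 0 < m) (hmm' : m < m')
    (fΓ R : (Fin (n + 1) → ℝ) → ℝ)
    (hfΓcont : Continuous fΓ)
    (hfΓqh : ∀ t : ℝ, 0 < t → ∀ x : Fin (n + 1) → ℝ,
      fΓ (fun j => t ^ (σ j) * x j) = t ^ m * fΓ x)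
    (C : ℝ) (hC : 0 < C)
    (hR : ∀ x : Fin (n + 1) → ℝ, (∑ j, |x j| ^ (1 / σ j)) ≤ 1 →
      |R x| ≤ C * (∑ j, |x j| ^ (1 / σ j)) ^ m')
    (x : ℕ → Fin (n + 1) → ℝ) (hx : ∀ k, fΓ (x k) + R (x k) = 0)
    (t : ℕ → ℝ) (ht : Tendsto t atTop atTop)
    (η : Fin (n + 1) → ℝ)
    (hlim : Tendsto (fun k => (fun j => (t k) ^ (σ j) * x k j)) atTop (nhds η)) :
    fΓ η = 0 :=
  tangent_cone_in_zero_set_of_principal_part_general n σ hσ m m' hm hmm' fΓ R hfΓcont hfΓqh C hR x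
    hx t ht η hlim
end

section
/- Let Ω ⊆ ℝ^n, ε > 0, and k ≥ 1. Let g : ℝ^k → ℝ be given by a power series g(x) = Σ_{α∈ℕ^k} g_α x^α that converges absolutely on the closed polydisc Q(η) = [−η_1,η_1] × ⋯ × [−η_k,η_k], i.e. Σ_α |g_α| η^α < ∞, where η_1, …, η_k > 0. Let f_1, …, f_k be Puiseux functions on C_ε(Ω) with nonnegative rational exponents whose Puiseux norms satisfy |f_j|_P ≤ η_j for each j. Then the composition g ∘ F, where F = (f_1, …, f_k) : C_ε(Ω) → ℝ^k, is again a Puiseux function on C_ε(Ω), and its Puiseux norm satisfies |g ∘ F|_P ≤ Σ_{α} |g_α| η^α. -/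
open BoundedContinuousFunction

private lemma rpow_finsum {x : ℝ} (hx : 0 ≤ x) {ι : Type*} (s : Finset ι) (a : ι → ℝ)
    (ha : ∀ i ∈ s, 0 ≤ a i) :
    x ^ (∑ i ∈ s, a i) = ∏ i ∈ s, x ^ (a i) := by
  induction s using Finset.cons_induction with
  | empty => simp
  | cons i s hi ih =>
    rw [Finset.sum_cons, Finset.prod_cons,
      Real.rpow_add_of_nonneg hx (ha i (Finset.mem_cons_self i s))
        (Finset.sum_nonneg fun j hj => ha j (Finset.mem_cons_of_mem hj)),
      ih (fun j hj => ha j (Finset.mem_cons_of_mem hj))]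

private lemma bcf_prod_apply {X : Type*} [TopologicalSpace X] {ι : Type*} (s : Finset ι)
    (g : ι → (X →ᵇ ℝ)) (x : X) : (∏ i ∈ s, g i) x = ∏ i ∈ s, g i x := by
  induction s using Finset.cons_induction with
  | empty => simp
  | cons i s hi ih => simp [Finset.prod_cons, ih]

private lemma bcf_norm_prod_le {X : Type*} [TopologicalSpace X] {ι : Type*} (s : Finset ι)
    (g : ι → (X →ᵇ ℝ)) : ‖∏ i ∈ s, g i‖ ≤ ∏ i ∈ s, ‖g i‖ := by
  refine (BoundedContinuousFunction.norm_le (Finset.prod_nonneg fun i _ => norm_nonneg _)).mpr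
    fun x => ?_
  rw [bcf_prod_apply, Real.norm_eq_abs, Finset.abs_prod]
  exact Finset.prod_le_prod (fun i _ => abs_nonneg _)
    (fun i _ => by simpa [Real.norm_eq_abs] using (g i).norm_coe_le_norm x)

private lemma tsum_prod_pi :
    ∀ (m : ℕ) (ι : Fin m → Type) (a : ∀ j, ι j → ℝ),
      (∀ j, Summable fun i => |a j i|) →
      Summable (fun φ : ∀ j, ι j => |∏ j, a j (φ j)|) ∧
        (∑' φ : ∀ j, ι j, ∏ j, a j (φ j)) = ∏ j, ∑' i, a j i := by
  intro m
  induction m with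
  | zero =>
    intro ι a _
    haveI : Unique (∀ j : Fin 0, ι j) := ⟨⟨fun j => j.elim0⟩, fun _ => funext fun j => j.elim0⟩
    constructor
    · exact .of_finite
    · rw [tsum_eq_single (default : ∀ j : Fin 0, ι j)
        (fun b hb => absurd (Subsingleton.elim b default) hb)]
      simp
  | succ n ih =>
    intro ι a ha
    obtain ⟨hS, hT⟩ := ih (fun j => ι j.succ) (fun j => a j.succ) (fun j => ha j.succ)
    have hu' : Summable fun i => ‖a 0 i‖ := (ha 0).congr fun i => (Real.norm_eq_abs _).symm
    have hv' : Summable fun g : ∀ j : Fin n, ι j.succ => ‖∏ j, a j.succ (g j)‖ :=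
      hS.congr fun g => (Real.norm_eq_abs _).symm
    have hmul' := hu'.mul_norm hv'
    have hprod' := tsum_mul_tsum_of_summable_norm hu' hv'
    have he : ∀ p : ι 0 × (∀ j : Fin n, ι j.succ),
        ∏ j, a j ((Fin.consEquiv ι) p j) = a 0 p.1 * ∏ j : Fin n, a j.succ (p.2 j) := by
      intro p
      rw [Fin.prod_univ_succ]
      simp [Fin.consEquiv]
    constructor
    · refine (Fin.consEquiv ι).summable_iff.mp ?_
      have heq : ((fun φ : ∀ j, ι j => |∏ j, a j (φ j)|) ∘ (Fin.consEquiv ι)) =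
          fun p : ι 0 × (∀ j : Fin n, ι j.succ) => |a 0 p.1 * ∏ j : Fin n, a j.succ (p.2 j)| := by
        funext p
        simp only [Function.comp_apply]
        rw [he p]
      rw [heq]
      exact hmul'.congr fun p => Real.norm_eq_abs _
    · rw [← (Fin.consEquiv ι).tsum_eq]
      calc (∑' p : ι 0 × (∀ j : Fin n, ι j.succ), ∏ j, a j ((Fin.consEquiv ι) p j))
          = ∑' p : ι 0 × (∀ j : Fin n, ι j.succ), a 0 p.1 * ∏ j : Fin n, a j.succ (p.2 j) :=
            tsum_congr he
        _ = (∑' i, a 0 i) * ∑' g : ∀ j : Fin n, ι j.succ, ∏ j, a j.succ (g j) := hprod'.symm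
        _ = ∏ j : Fin (n+1), ∑' i, a j i := by rw [hT, Fin.prod_univ_succ]

private lemma tsum_pow_abs {ι : Type} (b : ι → ℝ) (hb : Summable fun i => |b i|) (m : ℕ) :
    Summable (fun g : Fin m → ι => |∏ t, b (g t)|) ∧
      (∑' g : Fin m → ι, ∏ t, b (g t)) = (∑' i, b i) ^ m := by
  obtain ⟨h1, h2⟩ := tsum_prod_pi m (fun _ => ι) (fun _ => b) (fun _ => hb)
  exact ⟨h1, by rw [h2, Finset.prod_const, Finset.card_univ, Fintype.card_fin]⟩

private lemma expand_prod_pow (kk : ℕ) (b : Fin kk → ℕ → ℝ)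
    (hb : ∀ j, Summable fun i => |b j i|) (α : Fin kk → ℕ) :
    Summable (fun φ : ∀ j, Fin (α j) → ℕ => |∏ j, ∏ t, b j (φ j t)|) ∧
      (∑' φ : ∀ j, Fin (α j) → ℕ, ∏ j, ∏ t, b j (φ j t)) = ∏ j, (∑' i, b j i) ^ α j := by
  obtain ⟨h1, h2⟩ := tsum_prod_pi kk (fun j => Fin (α j) → ℕ)
    (fun j g => ∏ t, b j (g t)) (fun j => (tsum_pow_abs (b j) (hb j) (α j)).1)
  exact ⟨h1, by rw [h2]; exact Finset.prod_congr rfl fun j _ => (tsum_pow_abs (b j) (hb j) (α j)).2⟩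

set_option maxHeartbeats 1000000 in
/-- **Composition of an analytic function with Puiseux functions is a Puiseux function.**
If `g(x) = ∑_α c_α x^α` converges absolutely on the closed polydisc of polyradius `η`,
and `f_1, …, f_k` are Puiseux functions on `C_ε(Ω)` with Puiseux norms `|f_j|_P ≤ η_j`,
then `g ∘ (f_1, …, f_k)` is a Puiseux function with `|g ∘ F|_P ≤ ∑_α |c_α| η^α`. -/
theorem puiseux_composition
    (n k : ℕ) (hk : 1 ≤ k) (Ω : Set (Fin n → ℝ)) (ε : ℝ) (hε : 0 < ε)
    (η : Fin k → ℝ) (hη : ∀ j, 0 < η j)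
    (c : (Fin k → ℕ) → ℝ)
    (hc : Summable fun α : Fin k → ℕ => |c α| * ∏ j, η j ^ α j)
    (q : Fin k → ℕ → ℚ) (hq : ∀ j i, 0 ≤ q j i)
    (f : Fin k → ℕ → (↥Ω →ᵇ ℝ))
    (hf : ∀ j, Summable fun i => ‖f j i‖ * ε ^ ((q j i : ℝ)))
    (hfnorm : ∀ j, (∑' i, ‖f j i‖ * ε ^ ((q j i : ℝ))) ≤ η j) :
    ∃ (s : ℕ → ℚ) (h : ℕ → (↥Ω →ᵇ ℝ)),
      (∀ i, 0 ≤ s i) ∧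
      (Summable fun i => ‖h i‖ * ε ^ ((s i : ℝ))) ∧
      (∑' i, ‖h i‖ * ε ^ ((s i : ℝ))) ≤
        (∑' α : Fin k → ℕ, |c α| * ∏ j, η j ^ α j) ∧
      (∀ r ∈ Set.Icc (0 : ℝ) ε, ∀ ξ : ↥Ω,
        (∑' α : Fin k → ℕ, c α * ∏ j, (∑' i, f j i ξ * r ^ ((q j i : ℝ))) ^ α j)
          = ∑' i, h i ξ * r ^ ((s i : ℝ))) := by
  classical
  -- the coefficient bound sequences
  have hA0 : ∀ (j : Fin k) (i : ℕ), (0:ℝ) ≤ ‖f j i‖ * ε ^ ((q j i : ℝ)) := fun j i =>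
    mul_nonneg (norm_nonneg _) (Real.rpow_nonneg hε.le _)
  have hAsum : ∀ j, Summable fun i => |‖f j i‖ * ε ^ ((q j i : ℝ))| := fun j =>
    (hf j).congr fun i => (abs_of_nonneg (hA0 j i)).symm
  have hAtsum0 : ∀ j, (0:ℝ) ≤ ∑' i, ‖f j i‖ * ε ^ ((q j i : ℝ)) := fun j =>
    tsum_nonneg (hA0 j)
  -- the index type
  let T := Σ α : Fin k → ℕ, ∀ j : Fin k, Fin (α j) → ℕ
  haveI : Infinite T := by
    apply Infinite.of_injective (fun m : ℕ => (⟨fun _ => m, fun _ _ => 0⟩ : T))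
    intro m m' hmm
    exact congrFun (congrArg Sigma.fst hmm) ⟨0, hk⟩
  haveI : Encodable T := Encodable.ofCountable T
  haveI : Denumerable T := Denumerable.ofEncodableOfInfinite T
  let e : ℕ ≃ T := (Denumerable.eqv T).symm
  -- the exponent, coefficient and dominating families
  have hE0 : ∀ p : T, (0:ℚ) ≤ ∑ j, ∑ t, q j (p.2 j t) := fun p =>
    Finset.sum_nonneg fun j _ => Finset.sum_nonneg fun t _ => hq _ _
  have hEcast : ∀ p : T, (((∑ j, ∑ t, q j (p.2 j t) : ℚ)) : ℝ)
      = ∑ j, ∑ t, ((q j (p.2 j t) : ℝ)) := by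
    intro p
    push_cast
    rfl
  -- fiberwise summability of the dominating family
  have hfib : ∀ α : Fin k → ℕ,
      Summable (fun φ : ∀ j, Fin (α j) → ℕ =>
        |c α| * ∏ j, ∏ t, ‖f j (φ j t)‖ * ε ^ ((q j (φ j t) : ℝ))) ∧
      (∑' φ : ∀ j, Fin (α j) → ℕ,
          |c α| * ∏ j, ∏ t, ‖f j (φ j t)‖ * ε ^ ((q j (φ j t) : ℝ)))
        = |c α| * ∏ j, (∑' i, ‖f j i‖ * ε ^ ((q j i : ℝ))) ^ α j := by
    intro α
    have h1 : Summable (fun φ : ∀ j, Fin (α j) → ℕ =>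
        |∏ j, ∏ t, ‖f j (φ j t)‖ * ε ^ ((q j (φ j t) : ℝ))|) :=
      (expand_prod_pow k (fun j i => ‖f j i‖ * ε ^ ((q j i : ℝ))) hAsum α).1
    have h2 : (∑' φ : ∀ j, Fin (α j) → ℕ,
          ∏ j, ∏ t, ‖f j (φ j t)‖ * ε ^ ((q j (φ j t) : ℝ)))
        = ∏ j, (∑' i, ‖f j i‖ * ε ^ ((q j i : ℝ))) ^ α j :=
      (expand_prod_pow k (fun j i => ‖f j i‖ * ε ^ ((q j i : ℝ))) hAsum α).2
    have habs : (fun φ : ∀ j, Fin (α j) → ℕ =>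
          |∏ j, ∏ t, ‖f j (φ j t)‖ * ε ^ ((q j (φ j t) : ℝ))|) =
        fun φ : ∀ j, Fin (α j) → ℕ =>
          ∏ j, ∏ t, ‖f j (φ j t)‖ * ε ^ ((q j (φ j t) : ℝ)) :=
      funext fun φ => abs_of_nonneg
        (Finset.prod_nonneg fun j _ => Finset.prod_nonneg fun t _ => hA0 j _)
    rw [habs] at h1
    exact ⟨h1.mul_left _, by rw [tsum_mul_left, h2]⟩
  have hbound : ∀ α : Fin k → ℕ,
      |c α| * ∏ j, (∑' i, ‖f j i‖ * ε ^ ((q j i : ℝ))) ^ α j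
        ≤ |c α| * ∏ j, η j ^ α j := fun α =>
    mul_le_mul_of_nonneg_left
      (Finset.prod_le_prod (fun j _ => pow_nonneg (hAtsum0 j) _)
        (fun j _ => pow_le_pow_left₀ (hAtsum0 j) (hfnorm j) _)) (abs_nonneg _)
  have hrow0 : ∀ α : Fin k → ℕ,
      (0:ℝ) ≤ |c α| * ∏ j, (∑' i, ‖f j i‖ * ε ^ ((q j i : ℝ))) ^ α j := fun α =>
    mul_nonneg (abs_nonneg _) (Finset.prod_nonneg fun j _ => pow_nonneg (hAtsum0 j) _)
  have hDrow : Summable fun α : Fin k → ℕ =>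
      |c α| * ∏ j, (∑' i, ‖f j i‖ * ε ^ ((q j i : ℝ))) ^ α j :=
    Summable.of_nonneg_of_le hrow0 hbound hc
  have hD0 : ∀ p : T,
      (0:ℝ) ≤ |c p.1| * ∏ j, ∏ t, ‖f j (p.2 j t)‖ * ε ^ ((q j (p.2 j t) : ℝ)) := fun p =>
    mul_nonneg (abs_nonneg _)
      (Finset.prod_nonneg fun j _ => Finset.prod_nonneg fun t _ => hA0 j _)
  have hDsum : Summable fun p : T =>
      |c p.1| * ∏ j, ∏ t, ‖f j (p.2 j t)‖ * ε ^ ((q j (p.2 j t) : ℝ)) :=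
    (summable_sigma_of_nonneg hD0).mpr
      ⟨fun α => (hfib α).1, hDrow.congr fun α => ((hfib α).2).symm⟩
  have hDtsum : (∑' p : T, |c p.1| * ∏ j, ∏ t, ‖f j (p.2 j t)‖ * ε ^ ((q j (p.2 j t) : ℝ)))
      ≤ ∑' α : Fin k → ℕ, |c α| * ∏ j, η j ^ α j := by
    rw [Summable.tsum_sigma' (f := fun p : T =>
      |c p.1| * ∏ j, ∏ t, ‖f j (p.2 j t)‖ * ε ^ ((q j (p.2 j t) : ℝ)))
      (fun α => (hfib α).1) hDsum]
    calc (∑' (α : Fin k → ℕ) (φ : ∀ j, Fin (α j) → ℕ),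
            |c α| * ∏ j, ∏ t, ‖f j (φ j t)‖ * ε ^ ((q j (φ j t) : ℝ)))
        = ∑' α : Fin k → ℕ, |c α| * ∏ j, (∑' i, ‖f j i‖ * ε ^ ((q j i : ℝ))) ^ α j :=
          tsum_congr fun α => (hfib α).2
      _ ≤ _ := Summable.tsum_le_tsum hbound hDrow hc
  -- the Puiseux norm bound of the coefficients
  have hHle : ∀ p : T,
      ‖c p.1 • ∏ j, ∏ t, f j (p.2 j t)‖ * ε ^ (((∑ j, ∑ t, q j (p.2 j t) : ℚ) : ℝ))
        ≤ |c p.1| * ∏ j, ∏ t, ‖f j (p.2 j t)‖ * ε ^ ((q j (p.2 j t) : ℝ)) := by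
    rintro ⟨α, φ⟩
    have h1 : ‖c α • ∏ j, ∏ t, f j (φ j t)‖ ≤ |c α| * ∏ j, ∏ t, ‖f j (φ j t)‖ := by
      rw [norm_smul (c α) (∏ j, ∏ t, f j (φ j t)), Real.norm_eq_abs]
      refine mul_le_mul_of_nonneg_left ?_ (abs_nonneg _)
      refine le_trans (bcf_norm_prod_le _ _) ?_
      exact Finset.prod_le_prod (fun j _ => norm_nonneg _) (fun j _ => bcf_norm_prod_le _ _)
    have h2 : ε ^ (((∑ j, ∑ t, q j (φ j t) : ℚ) : ℝ))
        = ∏ j, ∏ t, ε ^ ((q j (φ j t) : ℝ)) := by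
      rw [hEcast ⟨α, φ⟩, rpow_finsum hε.le _ _
        (fun j _ => Finset.sum_nonneg fun t _ => Rat.cast_nonneg.mpr (hq _ _))]
      exact Finset.prod_congr rfl fun j _ =>
        rpow_finsum hε.le _ _ (fun t _ => Rat.cast_nonneg.mpr (hq _ _))
    calc ‖c α • ∏ j, ∏ t, f j (φ j t)‖ * ε ^ (((∑ j, ∑ t, q j (φ j t) : ℚ) : ℝ))
        ≤ (|c α| * ∏ j, ∏ t, ‖f j (φ j t)‖) * ∏ j, ∏ t, ε ^ ((q j (φ j t) : ℝ)) := by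
          rw [h2]
          exact mul_le_mul_of_nonneg_right h1
            (Finset.prod_nonneg fun j _ => Finset.prod_nonneg fun t _ =>
              Real.rpow_nonneg hε.le _)
      _ = |c α| * ∏ j, ∏ t, ‖f j (φ j t)‖ * ε ^ ((q j (φ j t) : ℝ)) := by
          rw [mul_assoc, ← Finset.prod_mul_distrib]
          congr 1
          exact Finset.prod_congr rfl fun j _ => (Finset.prod_mul_distrib).symm
  have hB0 : ∀ p : T, (0:ℝ) ≤ ‖c p.1 • ∏ j, ∏ t, f j (p.2 j t)‖ *
      ε ^ (((∑ j, ∑ t, q j (p.2 j t) : ℚ) : ℝ)) := fun p =>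
    mul_nonneg (norm_nonneg _) (Real.rpow_nonneg hε.le _)
  have hBsum : Summable fun p : T => ‖c p.1 • ∏ j, ∏ t, f j (p.2 j t)‖ *
      ε ^ (((∑ j, ∑ t, q j (p.2 j t) : ℚ) : ℝ)) :=
    Summable.of_nonneg_of_le hB0 hHle hDsum
  have hBtsum : (∑' p : T, ‖c p.1 • ∏ j, ∏ t, f j (p.2 j t)‖ *
        ε ^ (((∑ j, ∑ t, q j (p.2 j t) : ℚ) : ℝ)))
      ≤ ∑' α : Fin k → ℕ, |c α| * ∏ j, η j ^ α j :=
    le_trans (Summable.tsum_le_tsum hHle hBsum hDsum) hDtsum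
  refine ⟨fun i => ∑ j, ∑ t, q j ((e i).2 j t),
    fun i => c (e i).1 • ∏ j, ∏ t, f j ((e i).2 j t), ?_, ?_, ?_, ?_⟩
  · exact fun i => hE0 (e i)
  · have := e.summable_iff.mpr hBsum
    exact this
  · have heq := e.tsum_eq (fun p : T => ‖c p.1 • ∏ j, ∏ t, f j (p.2 j t)‖ *
      ε ^ (((∑ j, ∑ t, q j (p.2 j t) : ℚ) : ℝ)))
    calc (∑' i : ℕ, ‖c (e i).1 • ∏ j, ∏ t, f j ((e i).2 j t)‖ *
            ε ^ (((∑ j, ∑ t, q j ((e i).2 j t) : ℚ) : ℝ)))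
        = ∑' p : T, ‖c p.1 • ∏ j, ∏ t, f j (p.2 j t)‖ *
            ε ^ (((∑ j, ∑ t, q j (p.2 j t) : ℚ) : ℝ)) := heq
      _ ≤ _ := hBtsum
  · intro r hr ξ
    have hb : ∀ j, Summable fun i => |f j i ξ * r ^ ((q j i : ℝ))| := by
      intro j
      refine Summable.of_nonneg_of_le (fun i => abs_nonneg _) (fun i => ?_) (hf j)
      rw [abs_mul, abs_of_nonneg (Real.rpow_nonneg hr.1 _)]
      exact mul_le_mul (by simpa [Real.norm_eq_abs] using (f j i).norm_coe_le_norm ξ)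
        (Real.rpow_le_rpow hr.1 hr.2 (Rat.cast_nonneg.mpr (hq j i)))
        (Real.rpow_nonneg hr.1 _) (norm_nonneg _)
    have hble : ∀ (j : Fin k) (i : ℕ),
        |f j i ξ * r ^ ((q j i : ℝ))| ≤ ‖f j i‖ * ε ^ ((q j i : ℝ)) := by
      intro j i
      rw [abs_mul, abs_of_nonneg (Real.rpow_nonneg hr.1 _)]
      exact mul_le_mul (by simpa [Real.norm_eq_abs] using (f j i).norm_coe_le_norm ξ)
        (Real.rpow_le_rpow hr.1 hr.2 (Rat.cast_nonneg.mpr (hq j i)))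
        (Real.rpow_nonneg hr.1 _) (norm_nonneg _)
    have hGle : ∀ p : T,
        |c p.1 * ∏ j, ∏ t, f j (p.2 j t) ξ * r ^ ((q j (p.2 j t) : ℝ))|
          ≤ |c p.1| * ∏ j, ∏ t, ‖f j (p.2 j t)‖ * ε ^ ((q j (p.2 j t) : ℝ)) := by
      rintro ⟨α, φ⟩
      rw [abs_mul]
      refine mul_le_mul_of_nonneg_left ?_ (abs_nonneg _)
      rw [Finset.abs_prod]
      refine Finset.prod_le_prod (fun j _ => abs_nonneg _) (fun j _ => ?_)
      rw [Finset.abs_prod]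
      exact Finset.prod_le_prod (fun t _ => abs_nonneg _) (fun t _ => hble _ _)
    have hGsum : Summable fun p : T =>
        c p.1 * ∏ j, ∏ t, f j (p.2 j t) ξ * r ^ ((q j (p.2 j t) : ℝ)) :=
      Summable.of_abs (Summable.of_nonneg_of_le (fun p => abs_nonneg _) hGle hDsum)
    have key : ∀ α : Fin k → ℕ,
        c α * ∏ j, (∑' i, f j i ξ * r ^ ((q j i : ℝ))) ^ α j =
          ∑' φ : ∀ j, Fin (α j) → ℕ,
            c α * ∏ j, ∏ t, f j (φ j t) ξ * r ^ ((q j (φ j t) : ℝ)) := by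
      intro α
      have h2 : (∑' φ : ∀ j, Fin (α j) → ℕ,
            ∏ j, ∏ t, f j (φ j t) ξ * r ^ ((q j (φ j t) : ℝ)))
          = ∏ j, (∑' i, f j i ξ * r ^ ((q j i : ℝ))) ^ α j :=
        (expand_prod_pow k (fun j i => f j i ξ * r ^ ((q j i : ℝ))) hb α).2
      rw [tsum_mul_left, h2]
    have hpt : ∀ p : T,
        c p.1 * ∏ j, ∏ t, f j (p.2 j t) ξ * r ^ ((q j (p.2 j t) : ℝ))
          = (c p.1 • ∏ j, ∏ t, f j (p.2 j t)) ξ *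
              r ^ (((∑ j, ∑ t, q j (p.2 j t) : ℚ) : ℝ)) := by
      rintro ⟨α, φ⟩
      have hr2 : r ^ (((∑ j, ∑ t, q j (φ j t) : ℚ) : ℝ))
          = ∏ j, ∏ t, r ^ ((q j (φ j t) : ℝ)) := by
        rw [hEcast ⟨α, φ⟩, rpow_finsum hr.1 _ _
          (fun j _ => Finset.sum_nonneg fun t _ => Rat.cast_nonneg.mpr (hq _ _))]
        exact Finset.prod_congr rfl fun j _ =>
          rpow_finsum hr.1 _ _ (fun t _ => Rat.cast_nonneg.mpr (hq _ _))
      have hHξ : (c α • ∏ j, ∏ t, f j (φ j t)) ξ = c α * ∏ j, ∏ t, f j (φ j t) ξ := by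
        rw [BoundedContinuousFunction.coe_smul]
        simp only [Pi.smul_apply, smul_eq_mul]
        congr 1
        rw [bcf_prod_apply]
        exact Finset.prod_congr rfl fun j _ => bcf_prod_apply _ _ _
      rw [hHξ, hr2, mul_assoc, ← Finset.prod_mul_distrib]
      congr 1
      refine Finset.prod_congr rfl fun j _ => ?_
      rw [← Finset.prod_mul_distrib]
    have hsig := Summable.tsum_sigma' (f := fun p : T =>
        c p.1 * ∏ j, ∏ t, f j (p.2 j t) ξ * r ^ ((q j (p.2 j t) : ℝ)))
      (fun α => hGsum.sigma_factor α) hGsum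
    have heq2 := e.tsum_eq (fun p : T => (c p.1 • ∏ j, ∏ t, f j (p.2 j t)) ξ *
      r ^ (((∑ j, ∑ t, q j (p.2 j t) : ℚ) : ℝ)))
    calc (∑' α : Fin k → ℕ, c α * ∏ j, (∑' i, f j i ξ * r ^ ((q j i : ℝ))) ^ α j)
        = ∑' (α : Fin k → ℕ) (φ : ∀ j, Fin (α j) → ℕ),
            c α * ∏ j, ∏ t, f j (φ j t) ξ * r ^ ((q j (φ j t) : ℝ)) := tsum_congr key
      _ = ∑' p : T, c p.1 * ∏ j, ∏ t, f j (p.2 j t) ξ * r ^ ((q j (p.2 j t) : ℝ)) :=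
          hsig.symm
      _ = ∑' p : T, (c p.1 • ∏ j, ∏ t, f j (p.2 j t)) ξ *
            r ^ (((∑ j, ∑ t, q j (p.2 j t) : ℚ) : ℝ)) := tsum_congr hpt
      _ = ∑' i : ℕ, (c (e i).1 • ∏ j, ∏ t, f j ((e i).2 j t)) ξ *
            r ^ (((∑ j, ∑ t, q j ((e i).2 j t) : ℚ) : ℝ)) := heq2.symm
end

section
/- Let n ≥ 1, let σ_1, …, σ_{n+1} be positive integers, let m > 0 be such that each exponent 2m/σ_j is a positive even integer, and define φ(x) = Σ_{j=1}^{n+1} x_j^{2m/σ_j}. Let f : ℝ^{n+1} → ℝ be a C^∞ function that is quasihomogeneous of type (σ, m), i.e. f(t^{σ_1}x_1, …, t^{σ_{n+1}}x_{n+1}) = t^m f(x) for all t > 0 and x, and suppose the zero set of f has an isolated singularity at the origin: ∇f(x) ≠ 0 for all x ≠ 0 with f(x) = 0. Then for every ε > 0, the link L(ε) = { x ∈ ℝ^{n+1} : f(x) = 0 and φ(x) = ε^{2m} } is a smooth embedded submanifold of ℝ^{n+1} of codimension 2 (if nonempty): at every point of L(ε) the map x ↦ (f(x), φ(x)) is a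 submersion. -/
/-- **Smoothness of the link of a quasihomogeneous isolated hypersurface singularity.**
Let `f` be smooth and quasihomogeneous of type `(σ, m)` with integer weights `σ_j ≥ 1`,
`m > 0`, with isolated singularity at the origin (`∇f(x) ≠ 0` for `x ≠ 0` on `{f = 0}`),
and let `φ(x) = ∑_j x_j^{e_j}` where `e_j = 2m/σ_j` is a positive even integer.
Then for every `ε > 0`, at each point of the link
`L(ε) = {x : f x = 0, φ x = ε^{2m}}` the map `x ↦ (f x, φ x)` is a submersion,
so `L(ε)` is a smooth embedded submanifold of codimension `2` (if nonempty). -/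
theorem link_is_smooth
    (n : ℕ) (hn : 1 ≤ n)
    (σ : Fin (n + 1) → ℕ) (hσ : ∀ j, 0 < σ j)
    (m : ℝ) (hm : 0 < m)
    (e : Fin (n + 1) → ℕ)
    (he : ∀ j, ((σ j : ℝ)) * (e j : ℝ) = 2 * m ∧ Even (e j) ∧ 0 < e j)
    (f : (Fin (n + 1) → ℝ) → ℝ) (hf : ContDiff ℝ (⊤ : ℕ∞) f)
    (hqh : ∀ t : ℝ, 0 < t → ∀ x : Fin (n + 1) → ℝ,
      f (fun j => t ^ ((σ j : ℝ)) * x j) = t ^ m * f x)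
    (hisolated : ∀ x : Fin (n + 1) → ℝ, x ≠ 0 → f x = 0 → fderiv ℝ f x ≠ 0) :
    ∀ ε : ℝ, 0 < ε → ∀ x : Fin (n + 1) → ℝ,
      f x = 0 → (∑ j, x j ^ e j) = ε ^ (2 * m) →
      Function.Surjective
        (fderiv ℝ (fun y : Fin (n + 1) → ℝ => (f y, ∑ j, y j ^ e j)) x) := by
  intro ε hε x hfx hφx
  set φ : (Fin (n + 1) → ℝ) → ℝ := fun y => ∑ j, y j ^ e j with hφdef
  have hεpos : (0:ℝ) < ε ^ (2*m) := Real.rpow_pos_of_pos hε _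
  have hx0 : x ≠ 0 := by
    rintro rfl
    have h0 : (∑ j, (0 : Fin (n+1) → ℝ) j ^ e j) = 0 := by
      apply Finset.sum_eq_zero; intro j _
      simp [zero_pow (he j).2.2.ne']
    rw [h0] at hφx
    linarith
  -- all σ j * e j equal
  set N : ℕ := σ 0 * e 0 with hNdef
  have hNcast : ∀ j, σ j * e j = N := by
    intro j
    have h1 := (he j).1
    have h2 := (he 0).1
    have : ((σ j * e j : ℕ) : ℝ) = ((σ 0 * e 0 : ℕ) : ℝ) := by push_cast; linarith
    exact_mod_cast this
  have hNR : (N : ℝ) = 2 * m := by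
    have h2 := (he 0).1
    rw [hNdef]; push_cast; linarith
  -- the scaling curve
  set v : Fin (n + 1) → ℝ := fun j => (σ j : ℝ) * x j with hvdef
  have hγ : HasDerivAt (fun t : ℝ => fun j => t ^ (σ j) * x j) v 1 := by
    apply hasDerivAt_pi.2
    intro j
    have := (hasDerivAt_pow (σ j) (1:ℝ)).mul_const (x j)
    simpa [hvdef] using this
  have hγ1 : (fun j => (1:ℝ) ^ (σ j) * x j) = x := by funext j; simp
  -- Euler identity for f
  have hdf : HasFDerivAt f (fderiv ℝ f x) x :=
    ((hf.differentiable (by simp)) x).hasFDerivAt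
  have hdf' : HasFDerivAt f (fderiv ℝ f x) (fun j => (1:ℝ) ^ (σ j) * x j) := by
    rw [hγ1]; exact hdf
  have hcomp : HasDerivAt (fun t : ℝ => f (fun j => t ^ σ j * x j)) (fderiv ℝ f x v) 1 :=
    hdf'.comp_hasDerivAt 1 hγ
  have heq0 : ∀ t ∈ Set.Ioi (0:ℝ), f (fun j => t ^ σ j * x j) = 0 := by
    intro t ht
    have h := hqh t ht x
    simp only [Real.rpow_natCast] at h
    rw [h, hfx, mul_zero]
  have hev : (fun t : ℝ => f (fun j => t ^ σ j * x j)) =ᶠ[nhds (1:ℝ)] fun _ => 0 := by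
    filter_upwards [Ioi_mem_nhds one_pos] with t ht using heq0 t ht
  have hdfv : fderiv ℝ f x v = 0 := by
    have h1 : HasDerivAt (fun _ : ℝ => (0:ℝ)) (fderiv ℝ f x v) 1 :=
      hcomp.congr_of_eventuallyEq hev.symm
    have h2 : HasDerivAt (fun _ : ℝ => (0:ℝ)) 0 1 := hasDerivAt_const 1 0
    exact h1.unique h2
  -- φ is smooth
  have hφc : ContDiff ℝ (⊤ : ℕ∞) φ := by
    apply ContDiff.sum
    intro j _
    exact (ContinuousLinearMap.proj (R := ℝ) (φ := fun _ : Fin (n+1) => ℝ) j).contDiff.pow (e j)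
  have hφdf : HasFDerivAt φ (fderiv ℝ φ x) (fun j => (1:ℝ) ^ (σ j) * x j) := by
    rw [hγ1]; exact ((hφc.differentiable (by simp)) x).hasFDerivAt
  have hφcomp : HasDerivAt (fun t : ℝ => φ (fun j => t ^ σ j * x j)) (fderiv ℝ φ x v) 1 :=
    by have := hφdf.comp_hasDerivAt 1 hγ; exact this
  have hφeq : (fun t : ℝ => φ (fun j => t ^ σ j * x j)) = fun t : ℝ => t ^ N * ε ^ (2*m) := by
    funext t
    show (∑ j, (t ^ σ j * x j) ^ e j) = t ^ N * ε ^ (2*m)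
    calc (∑ j, (t ^ σ j * x j) ^ e j) = ∑ j, t ^ N * x j ^ e j := by
          apply Finset.sum_congr rfl
          intro j _
          rw [mul_pow, ← pow_mul, hNcast j]
      _ = t ^ N * ∑ j, x j ^ e j := by rw [Finset.mul_sum]
      _ = t ^ N * ε ^ (2*m) := by rw [hφx]
  have hmodel : HasDerivAt (fun t : ℝ => t ^ N * ε ^ (2*m)) ((N : ℝ) * ε ^ (2*m)) 1 := by
    simpa using (hasDerivAt_pow N (1:ℝ)).mul_const (ε ^ (2*m))
  have hφv : fderiv ℝ φ x v = 2 * m * ε ^ (2*m) := by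
    rw [hφeq] at hφcomp
    have := hφcomp.unique hmodel
    rw [this, hNR]
  -- nonvanishing direction for f
  have hL : fderiv ℝ f x ≠ 0 := hisolated x hx0 hfx
  obtain ⟨w, hw⟩ : ∃ w, fderiv ℝ f x w ≠ 0 := by
    by_contra h
    push_neg at h
    exact hL (ContinuousLinearMap.ext fun y => by simpa using h y)
  -- the product derivative
  have hprodfd : fderiv ℝ (fun y : Fin (n+1) → ℝ => (f y, φ y)) x
      = (fderiv ℝ f x).prod (fderiv ℝ φ x) :=
    DifferentiableAt.fderiv_prodMk ((hf.differentiable (by simp)) x) ((hφc.differentiable (by simp)) x)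
  show Function.Surjective (fderiv ℝ (fun y : Fin (n+1) → ℝ => (f y, φ y)) x)
  rw [hprodfd]
  rintro ⟨a, b⟩
  have hc : (2*m*ε^(2*m)) ≠ 0 := by positivity
  set d := fderiv ℝ f x w with hddef
  set s := (b - (a / d) * fderiv ℝ φ x w) / (2*m*ε^(2*m)) with hsdef
  refine ⟨(a / d) • w + s • v, ?_⟩
  have h1 : fderiv ℝ f x ((a / d) • w + s • v) = a := by
    rw [map_add, map_smul, map_smul, hdfv]
    simp only [smul_eq_mul, mul_zero, add_zero, ← hddef]
    field_simp
  have h2 : fderiv ℝ φ x ((a / d) • w + s • v) = b := by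
    rw [map_add, map_smul, map_smul, hφv]
    simp only [smul_eq_mul, hsdef]
    field_simp
    ring
  simp [ContinuousLinearMap.prod_apply, h1, h2]
end
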